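/- Fix β ∈ (0, 1/4) and define for index pairs (j,k) with 1 ≤ j ≤ k ≤ 4: β_{1,1} = β_{4,4} = β²/2, β_{2,2} = β_{3,3} = (1/2−β)²/2, β_{1,4} = β², β_{2,3} = (1/2−β)², and β_{1,2} = β_{1,3} = β_{2,4} = β_{3,4} = β(1/2−β). For c > 0 and a vector η = (η_{j,k})_{1≤j≤k≤4} with η_{j,k} > −β_{j,k}·√c for all (j,k), define I₃(β,η) = Σ_{1≤j≤k≤4} (β_{j,k} + η_{j,k}·c^{−1/2})·log(1 + η_{j,k}·β_{j,k}^{−1}·c^{−1/2}). Then for every a > 0 there exists c₀ = c₀(β,a) > 0 such that for all c > c₀ and all such η satisfying Σ_{1≤j≤k≤4} η_{j,k} = 0 and ‖η‖₂ ≥ a, one has I₃(β,η) ≥ a²/(4c). -/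

import Mathlib

/-- The coefficients `β_{j,k}` for `1 ≤ j ≤ k ≤ 4` (indices shifted to `Fin 4`):
`β_{1,1} = β_{4,4} = β²/2`, `β_{2,2} = β_{3,3} = (1/2−β)²/2`, `β_{1,4} = β²`,
`β_{2,3} = (1/2−β)²`, and `β_{1,2} = β_{1,3} = β_{2,4} = β_{3,4} = β(1/2−β)`. -/
noncomputable def betaCoef (β : ℝ) (j k : Fin 4) : ℝ :=
  if j = k then (if j = 0 ∨ j = 3 then β ^ 2 / 2 else (1/2 - β) ^ 2 / 2)
  else if j = 0 ∧ k = 3 then β ^ 2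
  else if j = 1 ∧ k = 2 then (1/2 - β) ^ 2
  else β * (1/2 - β)

/-- The index set of pairs `(j,k)` with `j ≤ k` in `Fin 4`. -/
def pairIdx : Finset (Fin 4 × Fin 4) := Finset.univ.filter fun p => p.1 ≤ p.2

/-- `I₃(β,η) = Σ_{1≤j≤k≤4} (β_{j,k} + η_{j,k}·c^{−1/2})·log(1 + η_{j,k}·β_{j,k}^{−1}·c^{−1/2})`. -/
noncomputable def I₃ (c β : ℝ) (η : Fin 4 × Fin 4 → ℝ) : ℝ :=
  ∑ p ∈ pairIdx,
    (betaCoef β p.1 p.2 + η p * c ^ (-(1:ℝ)/2)) *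
      Real.log (1 + η p * (betaCoef β p.1 p.2)⁻¹ * c ^ (-(1:ℝ)/2))

/-!
Put `y = 1 + η_{j,k} c^{-1/2} / β_{j,k}`. Each term of `I₃` equals
`β_{j,k} · klFun y + η_{j,k} c^{-1/2}` with `klFun y = y log y + 1 - y`, and the linear parts
cancel because `Σ η = 0`. Now `klFun y ≥ (y - 1)² / 4` on `(0, 2]`, and `klFun y ≥ klFun 2 > 1/4`
for `y ≥ 2` by convexity. If every `y ≤ 2`, the quadratic bound and `β_{j,k} ≤ 1/4` give
`I₃ ≥ ‖η‖² / c ≥ a² / c`; otherwise a single term already gives `I₃ ≥ β² / 8`, since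
`β_{j,k} ≥ β² / 2`, and this beats `a² / (4c)` once `c > 2a² / β²`.
-/

open Real

namespace InformationTheory

lemma hasDerivAt_klFun_sub_sq_div_four {y : ℝ} (hy : y ≠ 0) :
    HasDerivAt (fun y ↦ klFun y - (y - 1) ^ 2 / 4) (log y - (y - 1) / 2) y := by
  refine ((hasDerivAt_klFun hy).sub
    ((((hasDerivAt_id' y).sub_const 1).pow 2).div_const 4)).congr_deriv ?_
  ring

lemma sq_sub_one_div_four_le_klFun {y : ℝ} (hy₀ : 0 < y) (hy₂ : y ≤ 2) :
    (y - 1) ^ 2 / 4 ≤ klFun y := by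
  set g : ℝ → ℝ := fun y ↦ klFun y - (y - 1) ^ 2 / 4
  have hg : ContinuousOn g (Set.Ioi 0) := (by fun_prop : Continuous g).continuousOn
  have hg' : ∀ x ∈ Set.Ioi (0 : ℝ), HasDerivAt g (log x - (x - 1) / 2) x :=
    fun x hx ↦ hasDerivAt_klFun_sub_sq_div_four (ne_of_gt hx)
  suffices g 1 ≤ g y by simpa [g, klFun_one] using this
  rcases le_total y 1 with hy₁ | hy₁
  · refine antitoneOn_of_hasDerivWithinAt_nonpos (f' := fun x ↦ log x - (x - 1) / 2)
      (convex_Icc y 1) (hg.mono ?_) (fun x hx ↦ ?_) (fun x hx ↦ ?_)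
      ⟨le_rfl, hy₁⟩ ⟨hy₁, le_rfl⟩ hy₁
    · exact fun x hx ↦ hy₀.trans_le hx.1
    all_goals rw [interior_Icc] at hx
    · exact (hg' x (hy₀.trans hx.1)).hasDerivWithinAt
    · linarith [log_le_sub_one_of_pos (hy₀.trans hx.1), hx.2]
  · refine monotoneOn_of_hasDerivWithinAt_nonneg (f' := fun x ↦ log x - (x - 1) / 2)
      (convex_Icc 1 y) (hg.mono ?_) (fun x hx ↦ ?_) (fun x hx ↦ ?_)
      ⟨le_rfl, hy₁⟩ ⟨hy₁, le_rfl⟩ hy₁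
    · exact fun x hx ↦ one_pos.trans_le hx.1
    all_goals rw [interior_Icc] at hx
    · exact (hg' x (one_pos.trans hx.1)).hasDerivWithinAt
    · have hx₀ : 0 < x := one_pos.trans hx.1
      have : (x - 1) / 2 ≤ (x - 1) / x :=
        div_le_div_of_nonneg_left (by linarith [hx.1]) hx₀ (by linarith [hx.2])
      have : (x - 1) / x = 1 - x⁻¹ := by field_simp
      linarith [one_sub_inv_le_log_of_pos hx₀]

lemma one_div_four_le_klFun {y : ℝ} (hy : 2 ≤ y) : 1 / 4 ≤ klFun y := by
  have hklFun_two : 1 / 4 ≤ klFun 2 := by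
    rw [klFun_apply]; linarith [log_two_gt_d9]
  refine hklFun_two.trans (convexOn_klFun.le_right_of_left_le'' (x := 1) ?_ ?_ one_lt_two hy ?_)
  · simp
  · simp only [Set.mem_Ici]; linarith
  · rw [klFun_one]; linarith

lemma mul_log_one_add_div_eq {b : ℝ} (hb : b ≠ 0) (x : ℝ) :
    (b + x) * log (1 + x / b) = b * klFun (1 + x / b) + x := by
  rw [klFun_apply]
  field_simp
  ring

section WeightedSum

variable {ι : Type*} {s : Finset ι} {b x : ι → ℝ}

lemma sum_mul_log_one_add_div_eq_sum_mul_klFun (hb : ∀ i ∈ s, b i ≠ 0)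
    (hx : ∑ i ∈ s, x i = 0) :
    ∑ i ∈ s, (b i + x i) * log (1 + x i / b i) = ∑ i ∈ s, b i * klFun (1 + x i / b i) := by
  rw [Finset.sum_congr rfl fun i hi ↦ mul_log_one_add_div_eq (hb i hi) (x i),
    Finset.sum_add_distrib, hx, add_zero]

lemma min_sum_sq_le_sum_mul_klFun {m M : ℝ} (hm : 0 < m) (hb : ∀ i ∈ s, b i ∈ Set.Icc m M)
    (hx : ∀ i ∈ s, -b i < x i) :
    min (∑ i ∈ s, x i ^ 2 / (4 * M)) (m / 4) ≤ ∑ i ∈ s, b i * klFun (1 + x i / b i) := by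
  have hb₀ : ∀ i ∈ s, 0 < b i := fun i hi ↦ hm.trans_le (hb i hi).1
  have hy : ∀ i ∈ s, 0 < 1 + x i / b i := fun i hi ↦ by
    rw [one_add_div (hb₀ i hi).ne']
    exact div_pos (neg_lt_iff_pos_add'.mp (hx i hi)) (hb₀ i hi)
  by_cases hsmall : ∀ i ∈ s, x i ≤ b i
  · refine min_le_of_left_le (Finset.sum_le_sum fun i hi ↦ ?_)
    have hquad := sq_sub_one_div_four_le_klFun (hy i hi)
      (by linarith [(div_le_one (hb₀ i hi)).mpr (hsmall i hi)])
    have hbi : b i ≠ 0 := (hb₀ i hi).ne'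
    calc x i ^ 2 / (4 * M) ≤ x i ^ 2 / (4 * b i) :=
          div_le_div_of_nonneg_left (sq_nonneg _) (by linarith [hb₀ i hi])
            (by linarith [(hb i hi).2])
      _ = b i * ((1 + x i / b i - 1) ^ 2 / 4) := by field_simp; ring
      _ ≤ b i * klFun (1 + x i / b i) := by gcongr; exact (hb₀ i hi).le
  · push Not at hsmall
    obtain ⟨q, hq, hxq⟩ := hsmall
    have hlarge : 2 ≤ 1 + x q / b q := by linarith [(one_lt_div (hb₀ q hq)).mpr hxq]
    refine min_le_of_right_le ?_
    calc m / 4 = m * (1 / 4) := by ring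
      _ ≤ b q * klFun (1 + x q / b q) :=
          mul_le_mul (hb q hq).1 (one_div_four_le_klFun hlarge) (by norm_num) (hb₀ q hq).le
      _ ≤ ∑ i ∈ s, b i * klFun (1 + x i / b i) :=
          Finset.single_le_sum
            (fun i hi ↦ mul_nonneg (hb₀ i hi).le (klFun_nonneg (hy i hi).le)) hq

end WeightedSum

end InformationTheory

open InformationTheory

lemma betaCoef_mem_Icc {β : ℝ} (hβ : β ∈ Set.Ioo (0 : ℝ) (1 / 4)) (j k : Fin 4) :
    betaCoef β j k ∈ Set.Icc (β ^ 2 / 2) (1 / 4) := by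
  obtain ⟨hβ₀, hβ₁⟩ := hβ
  unfold betaCoef
  split_ifs <;> constructor <;> nlinarith

lemma I₃_eq_sum_mul_klFun {β c : ℝ} (hβ : β ∈ Set.Ioo (0 : ℝ) (1 / 4)) (hc : 0 < c)
    {η : Fin 4 × Fin 4 → ℝ} (hsum : ∑ p ∈ pairIdx, η p = 0) :
    I₃ c β η =
      ∑ p ∈ pairIdx, betaCoef β p.1 p.2 * klFun (1 + η p / √c / betaCoef β p.1 p.2) := by
  have hb₀ : ∀ p ∈ pairIdx, betaCoef β p.1 p.2 ≠ 0 := fun p _ ↦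
    ((div_pos (pow_pos hβ.1 2) two_pos).trans_le (betaCoef_mem_Icc hβ p.1 p.2).1).ne'
  rw [I₃, neg_div, rpow_neg hc.le, ← sqrt_eq_rpow]
  convert sum_mul_log_one_add_div_eq_sum_mul_klFun (s := pairIdx)
    (b := fun p ↦ betaCoef β p.1 p.2) (x := fun p ↦ η p / √c) hb₀
    (by rw [← Finset.sum_div, hsum, zero_div]) using 4 with p
  all_goals ring

lemma min_sum_sq_div_le_I₃ {β c : ℝ} (hβ : β ∈ Set.Ioo (0 : ℝ) (1 / 4)) (hc : 0 < c)
    {η : Fin 4 × Fin 4 → ℝ} (hη : ∀ p ∈ pairIdx, -(betaCoef β p.1 p.2) * √c < η p)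
    (hsum : ∑ p ∈ pairIdx, η p = 0) :
    min ((∑ p ∈ pairIdx, η p ^ 2) / c) (β ^ 2 / 2 / 4) ≤ I₃ c β η := by
  have hx : ∀ p ∈ pairIdx, -betaCoef β p.1 p.2 < η p / √c := fun p hp ↦
    (lt_div_iff₀ (sqrt_pos.mpr hc)).mpr (hη p hp)
  have hsq :
      ∑ p ∈ pairIdx, (η p / √c) ^ 2 / (4 * (1 / 4)) = (∑ p ∈ pairIdx, η p ^ 2) / c := by
    simp only [div_pow, sq_sqrt hc.le, Finset.sum_div]
    norm_num
  rw [I₃_eq_sum_mul_klFun hβ hc hsum, ← hsq]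
  exact min_sum_sq_le_sum_mul_klFun (div_pos (pow_pos hβ.1 2) two_pos)
    (fun p _ ↦ betaCoef_mem_Icc hβ p.1 p.2) hx

theorem stmt18 (β : ℝ) (hβ : β ∈ Set.Ioo (0 : ℝ) (1/4)) (a : ℝ) (ha : 0 < a) :
    ∃ c₀ > (0:ℝ), ∀ c > c₀, ∀ η : Fin 4 × Fin 4 → ℝ,
      (∀ p ∈ pairIdx, -(betaCoef β p.1 p.2) * Real.sqrt c < η p) →
      (∑ p ∈ pairIdx, η p = 0) →
      a ≤ Real.sqrt (∑ p ∈ pairIdx, (η p) ^ 2) →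
      a ^ 2 / (4 * c) ≤ I₃ c β η := by
  have hβ₂ : 0 < β ^ 2 := pow_pos hβ.1 2
  have hc₀ : 0 < 2 * a ^ 2 / β ^ 2 := div_pos (by positivity) hβ₂
  refine ⟨2 * a ^ 2 / β ^ 2, hc₀, fun c hc η hη hsum hnorm ↦ ?_⟩
  have hc_pos : 0 < c := hc₀.trans hc
  have ha₂ : a ^ 2 ≤ ∑ p ∈ pairIdx, η p ^ 2 :=
    (le_sqrt ha.le (Finset.sum_nonneg fun p _ ↦ sq_nonneg (η p))).mp hnorm
  refine le_trans (le_min ?_ ?_) (min_sum_sq_div_le_I₃ hβ hc_pos hη hsum)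
  · calc a ^ 2 / (4 * c) ≤ a ^ 2 / c :=
          div_le_div_of_nonneg_left (sq_nonneg a) hc_pos (by linarith)
      _ ≤ _ := by gcongr
  · have hcβ : 2 * a ^ 2 < c * β ^ 2 := (div_lt_iff₀ hβ₂).mp hc
    rw [div_le_iff₀ (by positivity)]
    nlinarith
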